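/- Let φ be a Leibniz 2-cocycle on the twisted Schrödinger-Virasoro algebra with φ(L_0, ·) and φ(·, L_0) vanishing on all basis elements, and set c_2 = −φ(L_1, M_{−1}), c_1 = φ(L_2, M_{−2})/2. Then φ(L_n, M_{−n}) = n(n−1)c_1 + n(n−2)c_2 for all n ∈ ℤ. -/

import Mathlib

abbrev B : Type := ℤ ⊕ ℤ ⊕ ℤ
abbrev V : Type := B →₀ ℂ

noncomputable def Lg (n : ℤ) : V := Finsupp.single (Sum.inl n) 1
noncomputable def Yg (n : ℤ) : V := Finsupp.single (Sum.inr (Sum.inl n)) 1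
noncomputable def Mg (n : ℤ) : V := Finsupp.single (Sum.inr (Sum.inr n)) 1

/-- Bracket on basis elements of the twisted Schrödinger–Virasoro algebra. -/
noncomputable def brB : B → B → V
  | Sum.inl n, Sum.inl m => ((m : ℂ) - n) • Lg (n + m)
  | Sum.inl n, Sum.inr (Sum.inl m) => ((m : ℂ) - n / 2) • Yg (n + m)
  | Sum.inl n, Sum.inr (Sum.inr p) => (p : ℂ) • Mg (n + p)
  | Sum.inr (Sum.inl m), Sum.inl n => -(((m : ℂ) - n / 2) • Yg (n + m))
  | Sum.inr (Sum.inr p), Sum.inl n => -((p : ℂ) • Mg (n + p))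
  | Sum.inr (Sum.inl m), Sum.inr (Sum.inl m') => ((m' : ℂ) - m) • Mg (m + m')
  | _, _ => 0

/-- The bilinear extension of the bracket to the whole space. -/
noncomputable def bk : V →ₗ[ℂ] V →ₗ[ℂ] V :=
  Finsupp.lsum ℂ fun a => LinearMap.toSpanSingleton ℂ (V →ₗ[ℂ] V)
    (Finsupp.lsum ℂ fun b => LinearMap.toSpanSingleton ℂ V (brB a b))

/-- `φ` is a Leibniz 2-cocycle on the twisted Schrödinger–Virasoro algebra. -/
def IsLeibnizCocycle (φ : V →ₗ[ℂ] V →ₗ[ℂ] ℂ) : Prop :=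
  ∀ x y z : V, φ x (bk y z) = φ (bk x y) z - φ (bk x z) y

/-!
Write `f n = φ(L_n, M_{-n})`. The cocycle identity on `(L_n, L_m, M_{-n-m})`, together with
`φ(M_{-m}, L_m) = -φ(L_m, M_{-m})` (the cocycle identity on `(L_0, M_{-m}, L_m)`), gives
`(m - n) f(n + m) = (n + m) (f m - f n)` for `m ≠ 0`. Both `n` and `n²` solve this recurrence,
and a solution vanishing at `1` and `2` vanishes identically: the case `m = 1` propagates zeros
upwards from `2`, and downwards from `-1`, where `m = 2, n = -1` gives `f(-1) = 0`.
-/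

section Recurrence

variable {K : Type*} [Field K] [CharZero K]

theorem eq_zero_of_recurrence {g : ℤ → K}
    (hg : ∀ n m : ℤ, m ≠ 0 → ((m : K) - n) * g (n + m) = ((n : K) + m) * (g m - g n))
    (h1 : g 1 = 0) (h2 : g 2 = 0) (n : ℤ) : g n = 0 := by
  have step (n : ℤ) : (1 - (n : K)) * g (n + 1) = -((n : K) + 1) * g n := by
    have := hg n 1 one_ne_zero
    push_cast at this
    linear_combination this + ((n : K) + 1) * h1
  have up (n : ℤ) (hn : 2 ≤ n) : g n = 0 := by
    induction n, hn using Int.leInduction with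
    | base => exact h2
    | succ k hk ih =>
      have hk' : 1 - (k : K) ≠ 0 := by
        rw [sub_ne_zero]; exact_mod_cast (show (1 : ℤ) ≠ k by omega)
      simpa [ih, hk'] using step k
  have down (n : ℤ) (hn : n ≤ -1) : g n = 0 := by
    induction n, hn using Int.leInductionDown with
    | base =>
      have h := hg (-1) 2 two_ne_zero
      norm_num [h1, h2] at h
      exact h
    | pred k hk ih =>
      have hk' : (k : K) ≠ 0 := by exact_mod_cast (show k ≠ 0 by omega)
      simpa [ih, hk'] using (step (k - 1)).symm
  obtain hn | rfl | rfl | hn : n ≤ -1 ∨ n = 0 ∨ n = 1 ∨ 2 ≤ n := by omega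
  · exact down n hn
  · simpa [down (-1) le_rfl] using step (-1)
  · exact h1
  · exact up n hn

theorem eq_quadratic_of_recurrence {f : ℤ → K}
    (hf : ∀ n m : ℤ, m ≠ 0 → ((m : K) - n) * f (n + m) = ((n : K) + m) * (f m - f n)) (n : ℤ) :
    f n = n * (n - 1) * (f 2 / 2) + n * (n - 2) * (-f 1) := by
  set q : ℤ → K := fun n => n * (n - 1) * (f 2 / 2) + n * (n - 2) * (-f 1)
  have hq (n m : ℤ) : ((m : K) - n) * q (n + m) = ((n : K) + m) * (q m - q n) := by
    simp only [q]; push_cast; ring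
  exact sub_eq_zero.mp <| eq_zero_of_recurrence (g := fun n => f n - q n)
    (fun n m hm => by linear_combination hf n m hm - hq n m) (by simp [q]; ring)
    (by simp [q]; ring) n

end Recurrence

theorem bk_single (a b : B) : bk (Finsupp.single a 1) (Finsupp.single b 1) = brB a b := by
  simp [bk, Finsupp.lsum_single, LinearMap.toSpanSingleton_apply]

theorem bk_Lg_Lg (n m : ℤ) : bk (Lg n) (Lg m) = ((m : ℂ) - n) • Lg (n + m) :=
  bk_single (Sum.inl n) (Sum.inl m)

theorem bk_Lg_Mg (n p : ℤ) : bk (Lg n) (Mg p) = (p : ℂ) • Mg (n + p) :=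
  bk_single (Sum.inl n) (Sum.inr (Sum.inr p))

theorem bk_Mg_Lg (p n : ℤ) : bk (Mg p) (Lg n) = -((p : ℂ) • Mg (n + p)) :=
  bk_single (Sum.inr (Sum.inr p)) (Sum.inl n)

namespace IsLeibnizCocycle

variable {φ : V →ₗ[ℂ] V →ₗ[ℂ] ℂ} (hco : IsLeibnizCocycle φ)
include hco

theorem apply_Lg_Lg_Mg (n m p : ℤ) :
    (p : ℂ) * φ (Lg n) (Mg (m + p)) =
      ((m : ℂ) - n) * φ (Lg (n + m)) (Mg p) - p * φ (Mg (n + p)) (Lg m) := by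
  simpa [bk_Lg_Lg, bk_Lg_Mg, smul_eq_mul] using hco (Lg n) (Lg m) (Mg p)

theorem apply_Mg_neg_Lg (h0 : ∀ p : ℤ, φ (Lg 0) (Mg p) = 0) {m : ℤ} (hm : m ≠ 0) :
    φ (Mg (-m)) (Lg m) = -φ (Lg m) (Mg (-m)) := by
  have h := hco (Lg 0) (Mg (-m)) (Lg m)
  simp only [bk_Mg_Lg, bk_Lg_Mg, bk_Lg_Lg, map_neg, map_smul, smul_eq_mul, h0, zero_add,
    LinearMap.smul_apply] at h
  have hm' : (m : ℂ) ≠ 0 := Int.cast_ne_zero.mpr hm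
  apply mul_left_cancel₀ hm'
  push_cast at h
  linear_combination h

theorem recurrence_Lg_Mg (h0 : ∀ p : ℤ, φ (Lg 0) (Mg p) = 0) (n m : ℤ) (hm : m ≠ 0) :
    ((m : ℂ) - n) * φ (Lg (n + m)) (Mg (-(n + m))) =
      ((n : ℂ) + m) * (φ (Lg m) (Mg (-m)) - φ (Lg n) (Mg (-n))) := by
  have h := hco.apply_Lg_Lg_Mg n m (-(n + m))
  rw [show m + -(n + m) = -n by ring, show n + -(n + m) = -m by ring,
    hco.apply_Mg_neg_Lg h0 hm] at h
  push_cast at h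
  linear_combination -h

end IsLeibnizCocycle

theorem stmt11 (φ : V →ₗ[ℂ] V →ₗ[ℂ] ℂ) (hco : IsLeibnizCocycle φ)
    (hL0 : ∀ b : B, φ (Lg 0) (Finsupp.single b 1) = 0 ∧ φ (Finsupp.single b 1) (Lg 0) = 0)
    (c1 c2 : ℂ) (hc2 : c2 = - φ (Lg 1) (Mg (-1))) (hc1 : c1 = φ (Lg 2) (Mg (-2)) / 2) :
    ∀ n : ℤ, φ (Lg n) (Mg (-n)) = (n : ℂ) * ((n : ℂ) - 1) * c1 + (n : ℂ) * ((n : ℂ) - 2) * c2 := by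
  intro n
  have h0 (p : ℤ) : φ (Lg 0) (Mg p) = 0 := (hL0 (Sum.inr (Sum.inr p))).1
  rw [hc1, hc2]
  exact eq_quadratic_of_recurrence (f := fun n => φ (Lg n) (Mg (-n)))
    (hco.recurrence_Lg_Mg h0) n
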